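/- Let A_Γ be a large-type Artin group, let s, t be standard generators, and let g ∈ A_Γ satisfy g ⟨t⟩ g⁻¹ ⊆ ⟨s⟩. Then there exist n ≥ 0 and vertices s = s₀, s₁, ..., s_n = t of Γ such that each pair {s_i, s_{i+1}} is an edge of Γ with odd label, and g ∈ Z_{A_Γ}(s) · Δ_{s₀ s₁} Δ_{s₁ s₂} ··· Δ_{s_{n-1} s_n}, where Z_{A_Γ}(s) is the centralizer of s in A_Γ and Δ_{uv} denotes the image in A_Γ of the alternating word uvu··· with m_{uv} letters. -/

import Mathlib

/-- The alternating product `a * b * a * ⋯` with `n` factors. -/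
def altProd {M : Type*} [Monoid M] : M → M → ℕ → M
  | _, _, 0 => 1
  | a, b, n + 1 => a * altProd b a n

/-- A defining graph: a finite simplicial graph with each edge labelled by a natural
number `≥ 2`. -/
structure DefiningGraph (V : Type*) where
  graph : SimpleGraph V
  label : V → V → ℕ
  label_symm : ∀ a b, label a b = label b a
  two_le_label : ∀ a b, graph.Adj a b → 2 ≤ label a b

/-- The Artin relations `π(a,b;m_ab) = π(b,a;m_ab)`, one for each edge `{a,b}` of the
defining graph. -/
def DefiningGraph.rels {V : Type*} (Γ : DefiningGraph V) : Set (FreeGroup V) :=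
  {r | ∃ a b, Γ.graph.Adj a b ∧
    r = altProd (FreeGroup.of a) (FreeGroup.of b) (Γ.label a b) *
      (altProd (FreeGroup.of b) (FreeGroup.of a) (Γ.label a b))⁻¹}

/-- The Artin group of a defining graph, as a presented group. The standard generator
corresponding to a vertex `v` is `PresentedGroup.of v`. -/
abbrev ArtinGroup {V : Type*} (Γ : DefiningGraph V) : Type _ := PresentedGroup Γ.rels

/-- The Garside-type element `Δ_{uv}`: the image in the Artin group of the alternating word
`uvu⋯` with `m_{uv}` letters. -/
def bigDelta {V : Type*} (Γ : DefiningGraph V) (u v : V) : ArtinGroup Γ :=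
  altProd (PresentedGroup.of u) (PresentedGroup.of v) (Γ.label u v)

/-!
Abelianising detects conjugacy here: a homomorphism `A_Γ → ℤ` may take any values on the
generators that are constant on the components of the odd-labelled subgraph. Sending every
generator to `1` shows that `g t g⁻¹ = s ^ k` forces `k = 1`, and the indicator of the odd
component of `s` then shows that `t` lies in that component. Along an odd edge `{u, v}` the
Artin relation gives `Δ_{uv} v = u Δ_{uv}`, so the product `D` of the `Δ`'s along an odd path
from `s` to `t` conjugates `t` to `s` just as `g` does, and `g D⁻¹` centralises `s`.
-/

section AltProd

variable {M : Type*} [Monoid M]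

theorem map_altProd {N : Type*} [Monoid N] (f : M →* N) :
    ∀ (n : ℕ) (a b : M), f (altProd a b n) = altProd (f a) (f b) n
  | 0, _, _ => map_one f
  | n + 1, a, b => by rw [altProd, altProd, map_mul, map_altProd f n b a]

theorem altProd_two_mul (a b : M) : ∀ k : ℕ, altProd a b (2 * k) = (a * b) ^ k
  | 0 => (pow_zero _).symm
  | k + 1 => by
    rw [show 2 * (k + 1) = 2 * k + 1 + 1 by ring, altProd, altProd, altProd_two_mul a b k,
      pow_succ', mul_assoc]

theorem altProd_two_mul_add_one (a b : M) (k : ℕ) :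
    altProd a b (2 * k + 1) = a * (b * a) ^ k := by
  rw [altProd, altProd_two_mul]

theorem altProd_mul_of_odd {n : ℕ} (hn : Odd n) (a b : M) :
    altProd a b n * b = a * altProd b a n := by
  obtain ⟨k, rfl⟩ := hn
  rw [altProd_two_mul_add_one, altProd_two_mul_add_one, mul_assoc, ← mul_pow_mul]

theorem altProd_comm_of_even {M : Type*} [CommMonoid M] {n : ℕ} (hn : Even n) (a b : M) :
    altProd a b n = altProd b a n := by
  obtain ⟨k, rfl⟩ := hn
  rw [← two_mul, altProd_two_mul, altProd_two_mul, mul_comm]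

end AltProd

namespace SemiconjBy

theorem prod_ofFn {M : Type*} [Monoid M] :
    ∀ {n : ℕ} (x : Fin n → M) (a : Fin (n + 1) → M),
      (∀ i, SemiconjBy (x i) (a i.succ) (a i.castSucc)) →
        SemiconjBy (List.ofFn x).prod (a (Fin.last n)) (a 0)
  | 0, _, _, _ => SemiconjBy.one_left _
  | n + 1, x, a, h => by
    rw [List.ofFn_succ, List.prod_cons]
    exact (h 0).mul_left (prod_ofFn (fun i => x i.succ) (fun i => a i.succ) fun i => h i.succ)

end SemiconjBy

namespace DefiningGraph

variable {V : Type*} (Γ : DefiningGraph V)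

def oddGraph : SimpleGraph V where
  Adj a b := Γ.graph.Adj a b ∧ Odd (Γ.label a b)
  symm := ⟨fun a b hab => ⟨hab.1.symm, Γ.label_symm a b ▸ hab.2⟩⟩
  loopless := ⟨fun a haa => Γ.graph.loopless.irrefl a haa.1⟩

end DefiningGraph

namespace ArtinGroup

variable {V : Type*} {Γ : DefiningGraph V}

theorem artin_relation {a b : V} (hab : Γ.graph.Adj a b) :
    altProd (PresentedGroup.of a : ArtinGroup Γ) (PresentedGroup.of b) (Γ.label a b) =
      altProd (PresentedGroup.of b) (PresentedGroup.of a) (Γ.label a b) := by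
  have hrel := PresentedGroup.mk_eq_mk_of_mul_inv_mem (rels := Γ.rels) ⟨a, b, hab, rfl⟩
  rwa [map_altProd, map_altProd] at hrel

theorem bigDelta_mul_of {u v : V} (huv : Γ.oddGraph.Adj u v) :
    bigDelta Γ u v * PresentedGroup.of v = PresentedGroup.of u * bigDelta Γ u v := by
  rw [bigDelta, altProd_mul_of_odd huv.2, artin_relation huv.1]

-- Abelianised, an even relation holds automatically and an odd one says `f a = f b`.
def liftOfOddAdj {G : Type*} [CommGroup G] (f : V → G)
    (hf : ∀ a b, Γ.oddGraph.Adj a b → f a = f b) : ArtinGroup Γ →* G :=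
  PresentedGroup.toGroup (f := f) <| by
    rintro r ⟨a, b, hab, rfl⟩
    rw [map_mul, map_inv, mul_inv_eq_one, map_altProd, map_altProd, FreeGroup.lift_apply_of,
      FreeGroup.lift_apply_of]
    rcases Nat.even_or_odd (Γ.label a b) with heven | hodd
    · exact altProd_comm_of_even heven _ _
    · rw [hf a b ⟨hab, hodd⟩]

theorem liftOfOddAdj_of {G : Type*} [CommGroup G] (f : V → G)
    (hf : ∀ a b, Γ.oddGraph.Adj a b → f a = f b) (v : V) :
    liftOfOddAdj f hf (PresentedGroup.of v) = f v :=
  PresentedGroup.toGroup.of _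

theorem eq_one_of_semiconjBy_zpow {s t : V} {g : ArtinGroup Γ} {k : ℤ}
    (hg : SemiconjBy g (PresentedGroup.of t) (PresentedGroup.of s ^ k)) : k = 1 := by
  let length := liftOfOddAdj (Γ := Γ) (fun _ => Multiplicative.ofAdd (1 : ℤ)) fun _ _ _ => rfl
  have := semiconjBy_iff_eq.mp (hg.map length)
  simp only [map_zpow, liftOfOddAdj_of, length] at this
  simpa using congrArg Multiplicative.toAdd this.symm

theorem oddGraph_reachable_of_semiconjBy {s t : V} {g : ArtinGroup Γ}
    (hg : SemiconjBy g (PresentedGroup.of t) (PresentedGroup.of s)) :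
    Γ.oddGraph.Reachable s t := by
  classical
  let component := Γ.oddGraph.connectedComponentMk s
  let inComponent := liftOfOddAdj (Γ := Γ)
    (fun v => if Γ.oddGraph.connectedComponentMk v = component then
      Multiplicative.ofAdd (1 : ℤ) else 1)
    fun a b hab => by rw [SimpleGraph.ConnectedComponent.connectedComponentMk_eq_of_adj hab]
  have := semiconjBy_iff_eq.mp (hg.map inComponent)
  refine SimpleGraph.Reachable.symm ?_
  rw [← SimpleGraph.ConnectedComponent.eq]
  by_contra hts
  simp only [inComponent, liftOfOddAdj_of, component, hts, if_true, if_false] at this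
  exact zero_ne_one (α := ℤ) (congrArg Multiplicative.toAdd this)

theorem semiconjBy_of_conj_mem_closure {s t : V} {g : ArtinGroup Γ}
    (h : ∀ x ∈ Subgroup.closure {(PresentedGroup.of t : ArtinGroup Γ)},
      g * x * g⁻¹ ∈ Subgroup.closure {(PresentedGroup.of s : ArtinGroup Γ)}) :
    SemiconjBy g (PresentedGroup.of t) (PresentedGroup.of s) := by
  obtain ⟨k, hk⟩ :=
    Subgroup.mem_closure_singleton.mp (h _ (Subgroup.mem_closure_singleton_self _))
  have hg : SemiconjBy g (PresentedGroup.of t) (PresentedGroup.of s ^ k) :=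
    (eq_mul_inv_iff_mul_eq.mp hk).symm
  rwa [eq_one_of_semiconjBy_zpow hg, zpow_one] at hg

end ArtinGroup

open ArtinGroup in
theorem conjugator_decomposition_general {V : Type*} (Γ : DefiningGraph V)
    (s t : V) (g : ArtinGroup Γ)
    (h : ∀ x ∈ Subgroup.closure {(PresentedGroup.of t : ArtinGroup Γ)},
      g * x * g⁻¹ ∈ Subgroup.closure {(PresentedGroup.of s : ArtinGroup Γ)}) :
    ∃ (n : ℕ) (p : Fin (n + 1) → V), p 0 = s ∧ p (Fin.last n) = t ∧
      (∀ i : Fin n, Γ.graph.Adj (p i.castSucc) (p i.succ) ∧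
        Odd (Γ.label (p i.castSucc) (p i.succ))) ∧
      ∃ z ∈ Subgroup.centralizer {(PresentedGroup.of s : ArtinGroup Γ)},
        g = z * (List.ofFn fun i : Fin n => bigDelta Γ (p i.castSucc) (p i.succ)).prod := by
  have hg := semiconjBy_of_conj_mem_closure h
  obtain ⟨w⟩ := oddGraph_reachable_of_semiconjBy hg
  have hadj (i : Fin w.length) : Γ.oddGraph.Adj (w.getVert i.castSucc) (w.getVert i.succ) :=
    w.adj_getVert_succ i.isLt
  refine ⟨w.length, fun i => w.getVert i, w.getVert_zero, w.getVert_length, hadj, ?_⟩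
  set D := (List.ofFn fun i : Fin w.length =>
    bigDelta Γ (w.getVert i.castSucc) (w.getVert i.succ)).prod
  have hD : SemiconjBy D (PresentedGroup.of t) (PresentedGroup.of s) := by
    simpa only [Fin.val_last, Fin.val_zero, w.getVert_length, w.getVert_zero] using
      SemiconjBy.prod_ofFn _ (fun i => PresentedGroup.of (w.getVert i))
        fun i => bigDelta_mul_of (hadj i)
  exact ⟨g * D⁻¹, Subgroup.mem_centralizer_singleton_iff.mpr (hg.mul_left hD.inv_symm_left),
    by group⟩

/-- In a large-type Artin group, if `g ⟨t⟩ g⁻¹ ⊆ ⟨s⟩` for standard generators `s, t`, then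
there is a path `s = s₀, s₁, …, s_n = t` through odd-labelled edges of `Γ`, and
`g ∈ Z_{A_Γ}(s) · Δ_{s₀s₁} Δ_{s₁s₂} ⋯ Δ_{s_{n-1}s_n}`. -/
theorem conjugator_decomposition {V : Type*} [Fintype V] (Γ : DefiningGraph V)
    (hlarge : ∀ a b : V, Γ.graph.Adj a b → 3 ≤ Γ.label a b)
    (s t : V) (g : ArtinGroup Γ)
    (h : ∀ x ∈ Subgroup.closure {(PresentedGroup.of t : ArtinGroup Γ)},
      g * x * g⁻¹ ∈ Subgroup.closure {(PresentedGroup.of s : ArtinGroup Γ)}) :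
    ∃ (n : ℕ) (p : Fin (n + 1) → V), p 0 = s ∧ p (Fin.last n) = t ∧
      (∀ i : Fin n, Γ.graph.Adj (p i.castSucc) (p i.succ) ∧
        Odd (Γ.label (p i.castSucc) (p i.succ))) ∧
      ∃ z ∈ Subgroup.centralizer {(PresentedGroup.of s : ArtinGroup Γ)},
        g = z * (List.ofFn fun i : Fin n => bigDelta Γ (p i.castSucc) (p i.succ)).prod :=
  conjugator_decomposition_general Γ s t g h
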